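/- arXiv:1708.05802 — 2 statements merged into one kernel-verified Lean document; each statement's English description precedes it below -/
import Mathlib

section
/- With notation as above, the subspace so(V₀) ⊕ (V₀ ⊗ V₁) generates so(V) as a Lie algebra; in particular no proper Lie subalgebra of so(V) contains both so(V₀) and all of V₀ ⊗ V₁. -/
/-! Every `B`-skew endomorphism is a combination of the elementary ones `tensorSkew B u w`
(expand in a basis and its `B`-dual basis), so it suffices that a Lie subalgebra containing
`so(V₀)` and `V₀ ⊗ V₁` contains all of them. By bilinearity only `V₁ ⊗ V₁` is missing, and it is
reached through `⁅v ∧ a, v ∧ b⁆ = B(v, v) • a ∧ b` for some `v ∈ V₀` with `B v v ≠ 0`; such a `v`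
exists because `B` is nondegenerate, `V₀ ≠ 0` and `V = V₀ ⊕ V₁` is a `B`-orthogonal sum. -/

open Module

attribute [local instance 100] LieRing.ofAssociativeRing

/-- The bilinear form `B` has signature `(p, q)`. -/
def HasSignature {V : Type*} [AddCommGroup V] [Module ℝ V]
    (B : LinearMap.BilinForm ℝ V) (p q : ℕ) : Prop :=
  ∃ b : Basis (Fin p ⊕ Fin q) ℝ V,
    (∀ i, B (b (Sum.inl i)) (b (Sum.inl i)) = 1) ∧
    (∀ j, B (b (Sum.inr j)) (b (Sum.inr j)) = -1) ∧
    (∀ i j, i ≠ j → B (b i) (b j) = 0)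

/-- `f` is skew-adjoint with respect to `B`. -/
def IsSkew {V : Type*} [AddCommGroup V] [Module ℝ V]
    (B : LinearMap.BilinForm ℝ V) (f : Module.End ℝ V) : Prop :=
  ∀ x y : V, B (f x) y = - B x (f y)

/-- The copy of `so(W^⊥)` inside `so(V)`: skew endomorphisms vanishing on `W`. -/
def soTriv {V : Type*} [AddCommGroup V] [Module ℝ V]
    (B : LinearMap.BilinForm ℝ V) (W : Submodule ℝ V) : Set (Module.End ℝ V) :=
  {f | IsSkew B f ∧ ∀ x ∈ W, f x = 0}

/-- The skew endomorphism `x ↦ B(v₀,x) v₁ - B(v₁,x) v₀` attached to `v₀ ⊗ v₁`. -/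
noncomputable def tensorSkew {V : Type*} [AddCommGroup V] [Module ℝ V]
    (B : LinearMap.BilinForm ℝ V) (v₀ v₁ : V) : Module.End ℝ V :=
  (LinearMap.toSpanSingleton ℝ V v₁).comp (B v₀) - (LinearMap.toSpanSingleton ℝ V v₀).comp (B v₁)

namespace LinearMap.BilinForm

variable {V : Type*} [AddCommGroup V] [Module ℝ V] {B : LinearMap.BilinForm ℝ V}

lemma isCompl_orthogonal_of_pos [FiniteDimensional ℝ V] (hsymm : B.IsSymm)
    {W : Submodule ℝ V} (hpos : ∀ w ∈ W, w ≠ 0 → 0 < B w w) : IsCompl W (B.orthogonal W) := by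
  refine (isCompl_orthogonal_iff_disjoint hsymm.isRefl).2 <|
    Submodule.disjoint_def.2 fun x hx hx' => ?_
  by_contra hx0
  exact (hpos x hx hx0).ne' (hx' x hx)

lemma exists_mem_apply_self_ne_zero_of_codisjoint (hsymm : B.IsSymm) (hnd : B.Nondegenerate)
    {V₀ V₁ : Submodule ℝ V} (hcod : Codisjoint V₀ V₁) (horth : ∀ x ∈ V₀, ∀ y ∈ V₁, B x y = 0)
    (hV₀ : V₀ ≠ ⊥) : ∃ v ∈ V₀, B v v ≠ 0 := by
  have : Invertible (2 : ℝ) := invertibleOfNonzero two_ne_zero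
  have hB₀ : B.restrict V₀ ≠ 0 := by
    intro h0
    obtain ⟨x, hx, hx0⟩ := Submodule.exists_mem_ne_zero_of_ne_bot hV₀
    refine hx0 (hnd.1 x fun y => ?_)
    obtain ⟨y₀, hy₀, y₁, hy₁, rfl⟩ := Submodule.mem_sup.1 (hcod.eq_top ▸ Submodule.mem_top (x := y))
    rw [map_add, horth x hx y₁ hy₁, add_zero]
    exact LinearMap.congr_fun₂ h0 ⟨x, hx⟩ ⟨y₀, hy₀⟩
  obtain ⟨⟨v, hv⟩, hvv⟩ := exists_bilinForm_self_ne_zero hB₀ (isSymm_iff.1 (hsymm.restrict V₀))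
  exact ⟨v, hv, hvv⟩

end LinearMap.BilinForm

section tensorSkew

open LinearMap.BilinForm

variable {V : Type*} [AddCommGroup V] [Module ℝ V] (B : LinearMap.BilinForm ℝ V)

lemma tensorSkew_apply (u w x : V) : tensorSkew B u w x = B u x • w - B w x • u := by
  simp [tensorSkew]

lemma tensorSkew_add_left (u u' w : V) :
    tensorSkew B (u + u') w = tensorSkew B u w + tensorSkew B u' w := by
  ext x; simp only [tensorSkew_apply, LinearMap.add_apply, map_add, add_smul, smul_add]; abel

lemma tensorSkew_add_right (u w w' : V) :
    tensorSkew B u (w + w') = tensorSkew B u w + tensorSkew B u w' := by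
  ext x; simp only [tensorSkew_apply, LinearMap.add_apply, map_add, add_smul, smul_add]; abel

lemma tensorSkew_swap (u w : V) : tensorSkew B u w = -tensorSkew B w u := by
  ext x; simp only [tensorSkew_apply, LinearMap.neg_apply, neg_sub]

variable {B}

lemma isSkew_tensorSkew (hsymm : B.IsSymm) (u w : V) : IsSkew B (tensorSkew B u w) := by
  intro x y
  simp only [tensorSkew_apply, map_sub, map_smul, LinearMap.sub_apply, LinearMap.smul_apply,
    smul_eq_mul, hsymm.eq x u, hsymm.eq x w]
  ring

lemma tensorSkew_mem_soTriv (hsymm : B.IsSymm) {W : Submodule ℝ V} {x y : V}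
    (hx : x ∈ B.orthogonal W) (hy : y ∈ B.orthogonal W) : tensorSkew B x y ∈ soTriv B W := by
  refine ⟨isSkew_tensorSkew hsymm x y, fun w hw => ?_⟩
  rw [tensorSkew_apply, hsymm.eq x, hsymm.eq y, hx w hw, hy w hw, zero_smul, zero_smul, sub_zero]

lemma mem_skewAdjointLieSubalgebra_iff (f : Module.End ℝ V) :
    f ∈ skewAdjointLieSubalgebra B ↔ IsSkew B f := by
  change f ∈ B.skewAdjointSubmodule ↔ _
  rw [LinearMap.mem_skewAdjointSubmodule]
  exact forall₂_congr fun x y => by simp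

lemma lie_tensorSkew_tensorSkew (hsymm : B.IsSymm) {v a b : V} (ha : B v a = 0)
    (hb : B v b = 0) : ⁅tensorSkew B v a, tensorSkew B v b⁆ = B v v • tensorSkew B a b := by
  have ha' : B a v = 0 := by rw [hsymm.eq, ha]
  have hb' : B b v = 0 := by rw [hsymm.eq, hb]
  ext x
  simp only [LieRing.of_associative_ring_bracket, LinearMap.sub_apply, Module.End.mul_apply,
    LinearMap.smul_apply, tensorSkew_apply, map_sub, map_smul, ha, hb, ha', hb',
    hsymm.eq b a]
  module

lemma IsSkew.two_smul_eq_sum_tensorSkew {ι : Type*} [DecidableEq ι] [Fintype ι] (hsymm : B.IsSymm)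
    (hnd : B.Nondegenerate) (b : Basis ι ℝ V) {f : Module.End ℝ V} (hf : IsSkew B f) :
    (2 : ℝ) • f = ∑ i, tensorSkew B (B.dualBasis hnd b i) (f (b i)) := by
  ext x
  have hx : ∑ i, B (B.dualBasis hnd b i) x • f (b i) = f x := by
    conv_rhs => rw [← (B.dualBasis hnd (B.dualBasis hnd b)).sum_repr x]
    simp only [dualBasis_repr_apply, map_sum, map_smul]
    simp only [dualBasis_dualBasis hnd hsymm, hsymm.eq x]
  have hfx : ∑ i, B (f (b i)) x • B.dualBasis hnd b i = -f x := by
    conv_rhs => rw [← (B.dualBasis hnd b).sum_repr (f x)]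
    simp only [dualBasis_repr_apply, hf _ x, hsymm.eq (f x), neg_smul, Finset.sum_neg_distrib]
  simp only [LinearMap.smul_apply, LinearMap.sum_apply, tensorSkew_apply, Finset.sum_sub_distrib,
    hx, hfx]
  module

lemma skewAdjointLieSubalgebra_le_of_forall_tensorSkew_mem [FiniteDimensional ℝ V]
    (hsymm : B.IsSymm) (hnd : B.Nondegenerate) {g : LieSubalgebra ℝ (Module.End ℝ V)}
    (hg : ∀ u w, tensorSkew B u w ∈ g) : skewAdjointLieSubalgebra B ≤ g := by
  intro f hf
  have h2f : (2 : ℝ) • f ∈ g := by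
    rw [IsSkew.two_smul_eq_sum_tensorSkew hsymm hnd (Module.finBasis ℝ V)
      ((mem_skewAdjointLieSubalgebra_iff f).1 hf)]
    exact sum_mem fun i _ => hg _ _
  simpa using g.smul_mem (2⁻¹ : ℝ) h2f

lemma tensorSkew_mem_of_codisjoint (hsymm : B.IsSymm) {V₀ V₁ : Submodule ℝ V}
    (hcod : Codisjoint V₀ V₁) (horth : ∀ x ∈ V₀, ∀ y ∈ V₁, B x y = 0) {v : V} (hv : v ∈ V₀)
    (hvv : B v v ≠ 0) {g : LieSubalgebra ℝ (Module.End ℝ V)}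
    (h₀₀ : ∀ x ∈ V₀, ∀ y ∈ V₀, tensorSkew B x y ∈ g)
    (h₀₁ : ∀ x ∈ V₀, ∀ y ∈ V₁, tensorSkew B x y ∈ g) (u w : V) : tensorSkew B u w ∈ g := by
  have h₁₀ : ∀ x ∈ V₁, ∀ y ∈ V₀, tensorSkew B x y ∈ g := fun x hx y hy => by
    rw [tensorSkew_swap]; exact neg_mem (h₀₁ y hy x hx)
  have h₁₁ : ∀ x ∈ V₁, ∀ y ∈ V₁, tensorSkew B x y ∈ g := fun x hx y hy => by
    rw [← inv_smul_smul₀ hvv (tensorSkew B x y),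
      ← lie_tensorSkew_tensorSkew hsymm (horth v hv x hx) (horth v hv y hy)]
    exact g.smul_mem _ (g.lie_mem (h₀₁ v hv x hx) (h₀₁ v hv y hy))
  obtain ⟨u₀, hu₀, u₁, hu₁, rfl⟩ := Submodule.mem_sup.1 (hcod.eq_top ▸ Submodule.mem_top (x := u))
  obtain ⟨w₀, hw₀, w₁, hw₁, rfl⟩ := Submodule.mem_sup.1 (hcod.eq_top ▸ Submodule.mem_top (x := w))
  simp only [tensorSkew_add_left, tensorSkew_add_right]
  exact add_mem (add_mem (h₀₀ _ hu₀ _ hw₀) (h₁₀ _ hu₁ _ hw₀))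
    (add_mem (h₀₁ _ hu₀ _ hw₁) (h₁₁ _ hu₁ _ hw₁))

end tensorSkew

/-- the subspace `so(V₀) ⊕ (V₀ ⊗ V₁)` generates `so(V)` as a Lie algebra;
in particular no proper Lie subalgebra of `so(V)` contains both `so(V₀)` and
all of `V₀ ⊗ V₁`. -/
theorem so_generated_by_soV0_and_tensor
    {V : Type*} [AddCommGroup V] [Module ℝ V] [FiniteDimensional ℝ V]
    (B : LinearMap.BilinForm ℝ V) (p q : ℕ)
    (hsig : HasSignature B p q) (hrank : 3 ≤ p + q)
    (hsymm : B.IsSymm) (hnd : B.Nondegenerate)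
    (V₁ : Submodule ℝ V) (hdim : Module.finrank ℝ V₁ = 2)
    (hpos : ∀ w ∈ V₁, w ≠ 0 → 0 < B w w)
    (V₀ : Submodule ℝ V) (hV₀ : V₀ = B.orthogonal V₁)
    (Tens : Set (Module.End ℝ V))
    (hTens : Tens = {f | ∃ v₀ ∈ V₀, ∃ v₁ ∈ V₁, f = tensorSkew B v₀ v₁}) :
    LieSubalgebra.lieSpan ℝ (Module.End ℝ V) (soTriv B V₁ ∪ Tens)
        = skewAdjointLieSubalgebra B ∧
    ∀ g : LieSubalgebra ℝ (Module.End ℝ V),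
      soTriv B V₁ ⊆ g → Tens ⊆ g → skewAdjointLieSubalgebra B ≤ g := by
  subst hV₀ hTens
  have hcompl := B.isCompl_orthogonal_of_pos hsymm hpos
  have horth : ∀ x ∈ B.orthogonal V₁, ∀ y ∈ V₁, B x y = 0 := fun x hx y hy => by
    rw [hsymm.eq]; exact hx y hy
  have hV₀ : B.orthogonal V₁ ≠ ⊥ := by
    obtain ⟨b, -⟩ := hsig
    intro h
    have := Submodule.finrank_add_eq_of_isCompl hcompl
    rw [h, finrank_bot, finrank_eq_card_basis b, hdim] at this
    simp only [Fintype.card_sum, Fintype.card_fin, add_zero] at this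
    omega
  obtain ⟨v, hv, hvv⟩ :=
    LinearMap.BilinForm.exists_mem_apply_self_ne_zero_of_codisjoint hsymm hnd
      hcompl.symm.codisjoint horth hV₀
  have hle : ∀ g : LieSubalgebra ℝ (Module.End ℝ V), soTriv B V₁ ⊆ g →
      {f | ∃ v₀ ∈ B.orthogonal V₁, ∃ v₁ ∈ V₁, f = tensorSkew B v₀ v₁} ⊆ g →
      skewAdjointLieSubalgebra B ≤ g := fun g hso hten =>
    skewAdjointLieSubalgebra_le_of_forall_tensorSkew_mem hsymm hnd <|
      tensorSkew_mem_of_codisjoint hsymm hcompl.symm.codisjoint horth hv hvv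
        (fun x hx y hy => hso (tensorSkew_mem_soTriv hsymm hx hy))
        (fun x hx y hy => hten ⟨x, hx, y, hy, rfl⟩)
  refine ⟨le_antisymm ?_ (hle _ (Set.subset_union_left.trans LieSubalgebra.subset_lieSpan)
    (Set.subset_union_right.trans LieSubalgebra.subset_lieSpan)), hle⟩
  rw [LieSubalgebra.lieSpan_le]
  rintro f (hf | ⟨x, -, y, -, rfl⟩)
  exacts [(mem_skewAdjointLieSubalgebra_iff f).2 hf.1,
    (mem_skewAdjointLieSubalgebra_iff _).2 (isSkew_tensorSkew hsymm x y)]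
end

section
/- Let W be a real quadratic space of signature (1,2) and let {s_i} be a family of vectors with q(s_i, s_i) < 0 such that all s_i are orthogonal to a fixed nonzero vector t ∈ W with q(t,t) ≥ 0. Then every connected component of P(Pos(W)) \ ∪ᵢ P(s_i^⊥) contains in its closure an open arc of the boundary circle ∂P(Pos(W)), provided the family of hyperplanes s_i^⊥ is locally finite on Pos(W). -/
open Metric

local notation "E" => EuclideanSpace ℝ (Fin 2)

/-!
Since `q(t,t) ≥ 0` and `t ≠ 0`, the first coordinate of `t` is nonzero and every chord passes
through the point `p = t.2 / t.1`. By local finiteness a small ball around `u` misses all chords;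
as the chords are lines through `p`, so does the open cone with apex `p` over that ball, and the
convex set cut out of the disk by this cone lies in the component of `u`. The ray from `p` through
`u` leaves the disk at a boundary point `z`, and the cone contains a ball around `z`, whose trace
on the circle is the arc.
-/

open Set Filter Topology
open scoped RealInnerProductSpace

section ApexCone

variable {V : Type*} [AddCommGroup V] [Module ℝ V]

/-- `y ∈ apexCone p s` iff the open ray from `p` through `y` meets `s`. -/
def apexCone (p : V) (s : Set V) : Set V :=
  {y | ∃ a : ℝ, 0 < a ∧ p + a • (y - p) ∈ s}

variable {p : V} {s : Set V}

lemma subset_apexCone : s ⊆ apexCone p s :=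
  fun y hy => ⟨1, one_pos, by simpa using hy⟩

lemma convex_apexCone (hs : Convex ℝ s) : Convex ℝ (apexCone p s) := by
  have hs' : Convex ℝ ((fun x => p + x) ⁻¹' s) := hs.translate_preimage_right p
  have h : apexCone p s = (fun y => y + -p) ⁻¹' ConvexCone.hull ℝ ((fun x => p + x) ⁻¹' s) := by
    ext y
    simp only [apexCone, mem_ofPred_eq, mem_preimage, SetLike.mem_coe,
      ConvexCone.mem_hull_of_convex hs', ← sub_eq_add_neg]
    constructor
    · rintro ⟨a, ha, hy⟩
      exact ⟨a⁻¹, inv_pos.mpr ha, (mem_smul_set_iff_inv_smul_mem₀ (inv_ne_zero ha.ne') _ _).mpr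
        (by rwa [inv_inv])⟩
    · rintro ⟨r, hr, hy⟩
      exact ⟨r⁻¹, inv_pos.mpr hr, (mem_smul_set_iff_inv_smul_mem₀ hr.ne' _ _).mp hy⟩
  rw [h]
  exact (ConvexCone.hull ℝ _).convex.translate_preimage_left (-p)

lemma disjoint_apexCone {L : Set V} (hL : ∀ a : ℝ, ∀ y ∈ L, p + a • (y - p) ∈ L)
    (hs : Disjoint s L) : Disjoint (apexCone p s) L := by
  rw [Set.disjoint_left]
  rintro y ⟨a, -, hy⟩ hyL
  exact Set.disjoint_left.mp hs hy (hL a y hyL)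

lemma isOpen_apexCone [TopologicalSpace V] [IsTopologicalAddGroup V] [ContinuousSMul ℝ V]
    (hs : IsOpen s) : IsOpen (apexCone p s) := by
  have h : apexCone p s = ⋃ a > (0 : ℝ), (fun y => p + a • (y - p)) ⁻¹' s := by
    ext y; simp [apexCone]
  rw [h]
  exact isOpen_biUnion fun a _ => hs.preimage (by fun_prop)

end ApexCone

section NormedSpace

variable {V : Type*} [NormedAddCommGroup V] [NormedSpace ℝ V]

lemma ball_subset_apexCone_ball {p u : V} {σ δ : ℝ} (hσ : 0 < σ) :
    ball (p + σ • (u - p)) (σ * δ) ⊆ apexCone p (ball u δ) := by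
  intro w hw
  refine ⟨σ⁻¹, inv_pos.mpr hσ, ?_⟩
  have h : p + σ⁻¹ • (w - p) - u = σ⁻¹ • (w - (p + σ • (u - p))) := by
    simp only [smul_sub, smul_add, smul_smul, inv_mul_cancel₀ hσ.ne', one_smul]; abel
  rw [mem_ball, dist_eq_norm, h, norm_smul, Real.norm_of_nonneg (inv_nonneg.mpr hσ.le),
    inv_mul_lt_iff₀ hσ]
  rwa [mem_ball, dist_eq_norm] at hw

lemma exists_pos_norm_add_smul_sub_eq {p u : V} {r : ℝ} (hu : ‖u‖ ≤ r) (hup : u ≠ p) :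
    ∃ σ : ℝ, 0 < σ ∧ ‖p + σ • (u - p)‖ = r := by
  set f : ℝ → ℝ := fun a => ‖p + a • (u - p)‖
  have hv : 0 < ‖u - p‖ := norm_pos_iff.mpr (sub_ne_zero.mpr hup)
  have hlower : ∀ a, a * ‖u - p‖ - ‖p‖ ≤ f a := fun a => calc
    a * ‖u - p‖ - ‖p‖ ≤ ‖a • (u - p)‖ - ‖-p‖ := by
      rw [norm_smul, norm_neg]; gcongr; exact Real.le_norm_self a
    _ ≤ ‖a • (u - p) - -p‖ := norm_sub_norm_le _ _
    _ = f a := by simp only [f, sub_neg_eq_add, add_comm]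
  have htop : Tendsto f atTop atTop :=
    tendsto_atTop_mono hlower
      (tendsto_atTop_add_const_right _ _ (tendsto_id.atTop_mul_const hv))
  have hf1 : f 1 = ‖u‖ := by simp [f]
  obtain ⟨σ, hσ, hσr⟩ := intermediate_value_Ici (a := (1 : ℝ)) (by fun_prop) htop
    (show r ∈ Ici (f 1) from hf1 ▸ hu)
  exact ⟨σ, one_pos.trans_le hσ, hσr⟩

end NormedSpace

section InnerProductSpace

variable {F : Type*} [NormedAddCommGroup F] [InnerProductSpace ℝ F]

lemma inner_add_smul_sub_eq {p y n : F} {c : ℝ} (a : ℝ) (hp : ⟪p, n⟫ = c)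
    (hy : ⟪y, n⟫ = c) : ⟪p + a • (y - p), n⟫ = c := by
  rw [inner_add_left, real_inner_smul_left, inner_sub_left, hp, hy, sub_self, mul_zero, add_zero]

lemma exists_forall_inner_eq {ι : Type*} {n : ι → F} {c : ι → ℝ} {a : ℝ} {v : F} (ha : a ≠ 0)
    (h : ∀ i, c i * a = ⟪n i, v⟫) : ∃ p : F, ∀ i, ⟪p, n i⟫ = c i :=
  ⟨a⁻¹ • v, fun i => by
    rw [real_inner_smul_left, real_inner_comm, ← h i, mul_comm, mul_inv_cancel_right₀ ha]⟩

lemma apexCone_inter_subset_connectedComponentIn {ι : Type*} {n : ι → F} {c : ι → ℝ}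
    {H : ι → Set F} (hH : ∀ i, H i ⊆ {x | ⟪x, n i⟫ = c i}) {p u : F} {δ : ℝ} {D : Set F}
    (hD : Convex ℝ D) (hu : u ∈ D) (hδ : 0 < δ) (hp : ∀ i, ⟪p, n i⟫ = c i)
    (hball : ∀ i, Disjoint (ball u δ) {x | ⟪x, n i⟫ = c i}) :
    apexCone p (ball u δ) ∩ D ⊆ connectedComponentIn (D \ ⋃ i, H i) u := by
  have hcone : ∀ i, Disjoint (apexCone p (ball u δ)) {x | ⟪x, n i⟫ = c i} := fun i =>
    disjoint_apexCone (fun a y hy => inner_add_smul_sub_eq a (hp i) hy) (hball i)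
  refine ((convex_apexCone (convex_ball u δ)).inter hD).isPreconnected.subset_connectedComponentIn
    ⟨subset_apexCone (mem_ball_self hδ), hu⟩ fun x hx => ⟨hx.2, ?_⟩
  simp only [mem_iUnion, not_exists]
  exact fun i hxH => disjoint_left.mp (hcone i) hx.1 (hH i hxH)

end InnerProductSpace

lemma exists_mem_nhds_forall_disjoint {X ι : Type*} [TopologicalSpace X] {A : ι → Set X}
    (hA : ∀ i, IsClosed (A i)) {u : X} (hu : ∀ i, u ∉ A i) {N : Set X} (hN : N ∈ 𝓝 u)
    (hfin : {i | (N ∩ A i).Nonempty}.Finite) : ∃ V ∈ 𝓝 u, ∀ i, Disjoint V (A i) := by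
  refine ⟨N ∩ ⋂ i ∈ {i | (N ∩ A i).Nonempty}, (A i)ᶜ,
    inter_mem hN ((biInter_mem hfin).mpr fun i _ => (hA i).compl_mem_nhds (hu i)), fun i => ?_⟩
  by_cases hi : (N ∩ A i).Nonempty
  · exact disjoint_compl_left.mono_left (inter_subset_right.trans (biInter_subset_of_mem hi))
  · exact (disjoint_iff_inter_eq_empty.mpr (not_nonempty_iff_eq_empty.mp hi)).mono_left
      inter_subset_left

theorem components_have_round_boundary_bits_general
    {ι : Type*} (s : ι → ℝ × E)
    -- the fixed vector `t`, nonzero with `q(t,t) ≥ 0` :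
    (t : ℝ × E) (ht0 : t ≠ 0) (ht : ‖t.2‖ ≤ |t.1|)
    -- all `s i` are orthogonal to `t` for the signature `(1,2)` form :
    (horth : ∀ i, (s i).1 * t.1 = inner ℝ (s i).2 t.2)
    -- the geodesics, as subsets of the open disk :
    (H : ι → Set E)
    (hH : ∀ i, H i = {u ∈ ball (0 : E) 1 | (inner ℝ u (s i).2 : ℝ) = (s i).1})
    -- local finiteness of the family of geodesics on the disk :
    (hlf : ∀ u ∈ ball (0 : E) 1, ∃ r > 0, {i | ∃ w ∈ ball u r, w ∈ H i}.Finite) :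
    -- every connected component of the complement has a round boundary bit :
    ∀ u ∈ ball (0 : E) 1 \ ⋃ i, H i,
      ∃ z ∈ sphere (0 : E) 1, ∃ ε > 0, ∀ w ∈ sphere (0 : E) 1, ‖w - z‖ < ε →
        w ∈ closure (connectedComponentIn (ball (0 : E) 1 \ ⋃ i, H i) u) := by
  intro u hu
  set L : ι → Set E := fun i => {x | ⟪x, (s i).2⟫ = (s i).1}
  have hHL : ∀ i, H i = ball 0 1 ∩ L i := hH
  have huL : ∀ i, u ∉ L i := fun i hi => hu.2 (mem_iUnion_of_mem i (hHL i ▸ ⟨hu.1, hi⟩))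
  have ht1 : t.1 ≠ 0 := fun h => ht0 <| Prod.ext h (norm_le_zero_iff.mp (by simpa [h] using ht))
  obtain ⟨p, hp⟩ := exists_forall_inner_eq ht1 horth
  rcases eq_or_ne u p with rfl | hup
  · have : IsEmpty ι := ⟨fun i => huL i (hp i)⟩
    refine ⟨EuclideanSpace.single 0 1, by simp, 1, one_pos, fun w hw _ => ?_⟩
    rw [iUnion_of_empty, sdiff_empty, (convex_ball _ _).isPreconnected.connectedComponentIn hu.1,
      closure_ball _ one_ne_zero]
    exact sphere_subset_closedBall hw
  obtain ⟨r, hr, hfin⟩ := hlf u hu.1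
  obtain ⟨V, hV, hVL⟩ := exists_mem_nhds_forall_disjoint
    (fun i => isClosed_eq (by fun_prop) continuous_const) huL
    (inter_mem (ball_mem_nhds u hr) (isOpen_ball.mem_nhds hu.1))
    (hfin.subset fun i ⟨w, ⟨hwr, hw1⟩, hwL⟩ => ⟨w, hwr, hHL i ▸ ⟨hw1, hwL⟩⟩)
  obtain ⟨δ, hδ, hδV⟩ := Metric.mem_nhds_iff.mp hV
  obtain ⟨σ, hσ, hz⟩ := exists_pos_norm_add_smul_sub_eq (mem_ball_zero_iff.mp hu.1).le hup
  refine ⟨_, mem_sphere_zero_iff_norm.mpr hz, σ * δ, by positivity, fun w hw hwz => ?_⟩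
  refine closure_mono (apexCone_inter_subset_connectedComponentIn (fun i => (hHL i).subset.trans
    inter_subset_right) (convex_ball 0 1) hu.1 hδ hp fun i => (hVL i).mono_left hδV) ?_
  refine (isOpen_apexCone isOpen_ball).inter_closure
    ⟨ball_subset_apexCone_ball hσ (mem_ball_iff_norm.mpr hwz), ?_⟩
  rw [closure_ball _ one_ne_zero]
  exact sphere_subset_closedBall hw

/-- in the Klein disk `D = P(Pos(W))` of a quadratic space `W` of
signature `(1,2)`, consider a locally finite family of geodesics traced by the
hyperplanes `s_i^⊥` with `q(s_i,s_i) < 0`, all orthogonal to a fixed nonzero vector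
`t` with `q(t,t) ≥ 0`.  (In disk coordinates a vector `s = (c, n)` with `|c| < ‖n‖`
traces the chord `{u ∈ D : ⟪u, n⟫ = c}`.)  Then every connected component of the
complement `D \ ⋃ᵢ s_i^⊥` contains in its closure an open arc of the boundary
circle. -/
theorem components_have_round_boundary_bits
    {ι : Type*} (s : ι → ℝ × E)
    -- each `s i` is a negative vector whose orthogonal traces a geodesic of the disk :
    (hneg : ∀ i, |(s i).1| < ‖(s i).2‖)
    -- the fixed vector `t`, nonzero with `q(t,t) ≥ 0` :
    (t : ℝ × E) (ht0 : t ≠ 0) (ht : ‖t.2‖ ≤ |t.1|)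
    -- all `s i` are orthogonal to `t` for the signature `(1,2)` form :
    (horth : ∀ i, (s i).1 * t.1 = inner ℝ (s i).2 t.2)
    -- the geodesics, as subsets of the open disk :
    (H : ι → Set E)
    (hH : ∀ i, H i = {u ∈ ball (0 : E) 1 | (inner ℝ u (s i).2 : ℝ) = (s i).1})
    -- local finiteness of the family of geodesics on the disk :
    (hlf : ∀ u ∈ ball (0 : E) 1, ∃ r > 0, {i | ∃ w ∈ ball u r, w ∈ H i}.Finite) :
    -- every connected component of the complement has a round boundary bit :
    ∀ u ∈ ball (0 : E) 1 \ ⋃ i, H i,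
      ∃ z ∈ sphere (0 : E) 1, ∃ ε > 0, ∀ w ∈ sphere (0 : E) 1, ‖w - z‖ < ε →
        w ∈ closure (connectedComponentIn (ball (0 : E) 1 \ ⋃ i, H i) u) :=
  components_have_round_boundary_bits_general s t ht0 ht horth H hH hlf
end
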